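/- (Multiple-access output factorization and necessity of product structure.) For every (2^{ℓ₁},2^{ℓ₂},n) coordination code for the multiple-access network, the reduced output state on Alice's and Bob's systems factorizes: ρ̂_{A^n B^n} = ρ^{(1)}_{A^n} ⊗ ρ^{(2)}_{B^n}. Consequently, if some rate pair (Q₁, Q₂) is achievable for a state ω_{ABC} in the multiple-access network, then ω_{AB} = ω_A ⊗ ω_B. -/

import Mathlib

/-!
Common definitions for quantum coordination networks:
density operators, purity, trace norm, von Neumann entropy, partial traces,
mutual information, CPTP maps (via the Choi matrix), tensor products and
application of channels to subsystems.
-/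

noncomputable section
open scoped BigOperators ComplexOrder

namespace QCoord

variable {α β γ δ : Type*}

/-- A density operator: positive semidefinite with unit trace. -/
def IsDensity [Fintype α] (ρ : Matrix α α ℂ) : Prop :=
  ρ.PosSemidef ∧ ρ.trace = 1

/-- Outer product |v⟩⟨v| of a vector. -/
def outer [Fintype α] (v : α → ℂ) : Matrix α α ℂ :=
  Matrix.of fun i j => v i * star (v j)

/-- A pure state: a rank-one density operator. -/
def IsPure [Fintype α] (ρ : Matrix α α ℂ) : Prop :=
  IsDensity ρ ∧ ∃ v : α → ℂ, ρ = outer v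

/-- The trace norm ‖M‖₁ = tr √(Mᴴ M). -/
def traceNorm [Fintype α] [DecidableEq α] (M : Matrix α α ℂ) : ℝ :=
  ((Matrix.posSemidef_conjTranspose_mul_self M).1.eigenvectorUnitary.1 *
    Matrix.diagonal (fun i => ((√((Matrix.posSemidef_conjTranspose_mul_self M).1.eigenvalues i) : ℝ) : ℂ)) *
    (star (Matrix.posSemidef_conjTranspose_mul_self M).1.eigenvectorUnitary :
      Matrix α α ℂ)).trace.re

/-- Von Neumann entropy in qubits (base-2), via eigenvalues; junk value 0 for
non-Hermitian inputs. -/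
def entropy [Fintype α] [DecidableEq α] (ρ : Matrix α α ℂ) : ℝ :=
  if h : ρ.IsHermitian then
    -∑ i, (h.eigenvalues i) * Real.logb 2 (h.eigenvalues i)
  else 0

/-- Partial trace over the second (right) factor. -/
def ptrR [Fintype β] (ρ : Matrix (α × β) (α × β) ℂ) : Matrix α α ℂ :=
  Matrix.of fun i j => ∑ k, ρ (i, k) (j, k)

/-- Partial trace over the first (left) factor. -/
def ptrL [Fintype α] (ρ : Matrix (α × β) (α × β) ℂ) : Matrix β β ℂ :=
  Matrix.of fun i j => ∑ k, ρ (k, i) (k, j)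

/-- Quantum mutual information I(α;β)_ρ for a bipartite state. -/
def mutualInfo [Fintype α] [Fintype β] [DecidableEq α] [DecidableEq β]
    (ρ : Matrix (α × β) (α × β) ℂ) : ℝ :=
  entropy (ptrR ρ) + entropy (ptrL ρ) - entropy ρ

/-- Conditional entropy S(α|β)_ρ = S(αβ) - S(β). -/
def condEntropy [Fintype α] [Fintype β] [DecidableEq α] [DecidableEq β]
    (ρ : Matrix (α × β) (α × β) ℂ) : ℝ :=
  entropy ρ - entropy (ptrL ρ)

/-- Choi matrix of a linear map on matrices. -/
def choi [Fintype α] [DecidableEq α]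
    (Φ : Matrix α α ℂ →ₗ[ℂ] Matrix β β ℂ) : Matrix (α × β) (α × β) ℂ :=
  Matrix.of fun p q => Φ (Matrix.single p.1 q.1 1) p.2 q.2

/-- CPTP (quantum channel): completely positive (PSD Choi matrix) and
trace-preserving. -/
def IsCPTP [Fintype α] [DecidableEq α] [Fintype β]
    (Φ : Matrix α α ℂ →ₗ[ℂ] Matrix β β ℂ) : Prop :=
  (choi Φ).PosSemidef ∧ ∀ ρ : Matrix α α ℂ, (Φ ρ).trace = ρ.trace

/-- Tensor (Kronecker) product of two square matrices. -/
def tens (X : Matrix α α ℂ) (Y : Matrix β β ℂ) : Matrix (α × β) (α × β) ℂ :=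
  Matrix.of fun p q => X p.1 q.1 * Y p.2 q.2

/-- Extension Φ ⊗ id of a channel by an identity on a spectator system. -/
def extR (Φ : Matrix α α ℂ →ₗ[ℂ] Matrix β β ℂ)
    (ρ : Matrix (α × γ) (α × γ) ℂ) : Matrix (β × γ) (β × γ) ℂ :=
  Matrix.of fun p q => Φ (Matrix.of fun i j => ρ (i, p.2) (j, q.2)) p.1 q.1

/-- Apply a channel to the subsystem identified by the equivalence `e`. -/
def applyOn {ε' : Type*} (e : δ ≃ α × γ)
    (Φ : Matrix α α ℂ →ₗ[ℂ] Matrix ε' ε' ℂ)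
    (ρ : Matrix δ δ ℂ) : Matrix (ε' × γ) (ε' × γ) ℂ :=
  extR Φ (Matrix.reindex e e ρ)

/-- n-fold tensor power of a square matrix. -/
def tpow [Fintype α] (ρ : Matrix α α ℂ) (n : ℕ) :
    Matrix (Fin n → α) (Fin n → α) ℂ :=
  Matrix.of fun i j => ∏ k, ρ (i k) (j k)

end QCoord

/-! ### The cascade network -/

namespace QCoord

/-- Reordering for Bob's encoding step in the cascade network. -/
def eBob {An M1 TB1 TB2 TC : Type*} :
    (((An × M1) × TB1) × (TB2 × TC)) ≃ ((M1 × TB1 × TB2) × (An × TC)) where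
  toFun x := ((x.1.1.2, x.1.2, x.2.1), (x.1.1.1, x.2.2))
  invFun y := (((y.2.1, y.1.1), y.1.2.1), (y.1.2.2, y.2.2))
  left_inv _ := rfl
  right_inv _ := rfl

/-- Reordering for Charlie's encoding step in the cascade network. -/
def eCharlie {Bn M2 An TC : Type*} :
    ((Bn × M2) × (An × TC)) ≃ ((M2 × TC) × (An × Bn)) where
  toFun x := ((x.1.2, x.2.2), (x.2.1, x.1.1))
  invFun y := ((y.2.2, y.1.1), (y.2.1, y.1.2))
  left_inv _ := rfl
  right_inv _ := rfl

/-- Final reordering to (Aⁿ, Bⁿ, Cⁿ). -/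
def eFin {Cn An Bn : Type*} : (Cn × (An × Bn)) ≃ (An × Bn × Cn) where
  toFun x := (x.2.1, x.2.2, x.1)
  invFun y := (y.2.2, (y.1, y.2.1))
  left_inv _ := rfl
  right_inv _ := rfl

variable {A B C R : Type*}

/-- n-fold tensor power of a tripartite state, indexed by
(Fin n → A) × (Fin n → B) × (Fin n → C). -/
def prodPow3 [Fintype A] [Fintype B] [Fintype C]
    (ω : Matrix (A × B × C) (A × B × C) ℂ) (n : ℕ) :
    Matrix ((Fin n → A) × (Fin n → B) × (Fin n → C))
      ((Fin n → A) × (Fin n → B) × (Fin n → C)) ℂ :=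
  Matrix.of fun p q =>
    ∏ k, ω (p.1 k, p.2.1 k, p.2.2 k) (q.1 k, q.2.1 k, q.2.2 k)

/-- n-fold tensor power of a four-partite state. -/
def prodPow4 [Fintype R] [Fintype A] [Fintype B] [Fintype C]
    (ωR : Matrix (R × A × B × C) (R × A × B × C) ℂ) (n : ℕ) :
    Matrix ((Fin n → R) × (Fin n → A) × (Fin n → B) × (Fin n → C))
      ((Fin n → R) × (Fin n → A) × (Fin n → B) × (Fin n → C)) ℂ :=
  Matrix.of fun p q =>
    ∏ k, ωR (p.1 k, p.2.1 k, p.2.2.1 k, p.2.2.2 k)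
      (q.1 k, q.2.1 k, q.2.2.1 k, q.2.2.2 k)

/-- Marginal ω_{BC} of a tripartite state. -/
def mBC [Fintype A] (ω : Matrix (A × B × C) (A × B × C) ℂ) :
    Matrix (B × C) (B × C) ℂ :=
  Matrix.of fun p q => ∑ a, ω (a, p.1, p.2) (a, q.1, q.2)

/-- Marginal ω_C of a tripartite state. -/
def mC [Fintype A] [Fintype B] (ω : Matrix (A × B × C) (A × B × C) ℂ) :
    Matrix C C ℂ :=
  Matrix.of fun c c' => ∑ a, ∑ b, ω (a, b, c) (a, b, c')

/-- Marginal on ((B×C), R) of a purified state ω_{RABC}, arranged for I(BC;R). -/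
def mBC_R [Fintype A] (ωR : Matrix (R × A × B × C) (R × A × B × C) ℂ) :
    Matrix ((B × C) × R) ((B × C) × R) ℂ :=
  Matrix.of fun p q => ∑ a, ωR (p.2, a, p.1.1, p.1.2) (q.2, a, q.1.1, q.1.2)

/-- Marginal on (C, (R×A)) of a purified state ω_{RABC}, arranged for I(C;RA). -/
def mC_RA [Fintype B] (ωR : Matrix (R × A × B × C) (R × A × B × C) ℂ) :
    Matrix (C × (R × A)) (C × (R × A)) ℂ :=
  Matrix.of fun p q => ∑ b, ωR (p.2.1, p.2.2, b, p.1) (q.2.1, q.2.2, b, q.1)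

variable (A B C) in
/-- A (2^ℓ₁, 2^ℓ₂, 2^k₁, 2^k₂, n) coordination code for the cascade network:
pre-shared entangled pure states Ψ (Alice–Bob) and Θ (Bob–Charlie) of Schmidt
ranks 2^{k₁}, 2^{k₂}, and CPTP encoders for Alice, Bob and Charlie with quantum
messages of dimensions 2^{ℓ₁}, 2^{ℓ₂}. -/
structure CascadeCode [Fintype A] [DecidableEq A] [Fintype B] [DecidableEq B]
    [Fintype C] [DecidableEq C] (ℓ₁ ℓ₂ k₁ k₂ n : ℕ) where
  Ψ : Matrix (Fin (2 ^ k₁) × Fin (2 ^ k₁)) (Fin (2 ^ k₁) × Fin (2 ^ k₁)) ℂ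
  Ψ_pure : IsPure Ψ
  Θ : Matrix (Fin (2 ^ k₂) × Fin (2 ^ k₂)) (Fin (2 ^ k₂) × Fin (2 ^ k₂)) ℂ
  Θ_pure : IsPure Θ
  EncA : Matrix (Fin (2 ^ k₁)) (Fin (2 ^ k₁)) ℂ →ₗ[ℂ]
    Matrix ((Fin n → A) × Fin (2 ^ ℓ₁)) ((Fin n → A) × Fin (2 ^ ℓ₁)) ℂ
  EncA_cptp : IsCPTP EncA
  EncB : Matrix (Fin (2 ^ ℓ₁) × Fin (2 ^ k₁) × Fin (2 ^ k₂))
      (Fin (2 ^ ℓ₁) × Fin (2 ^ k₁) × Fin (2 ^ k₂)) ℂ →ₗ[ℂ]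
    Matrix ((Fin n → B) × Fin (2 ^ ℓ₂)) ((Fin n → B) × Fin (2 ^ ℓ₂)) ℂ
  EncB_cptp : IsCPTP EncB
  Dec : Matrix (Fin (2 ^ ℓ₂) × Fin (2 ^ k₂)) (Fin (2 ^ ℓ₂) × Fin (2 ^ k₂)) ℂ →ₗ[ℂ]
    Matrix (Fin n → C) (Fin n → C) ℂ
  Dec_cptp : IsCPTP Dec

/-- Output state ρ̂_{AⁿBⁿCⁿ} of a cascade coordination code: Alice applies her
encoder to her share of Ψ, Bob applies his encoder to (M₁, T_B', T_B''), and
Charlie applies his to (M₂, T_C). -/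
def cascadeOutput [Fintype A] [DecidableEq A] [Fintype B] [DecidableEq B]
    [Fintype C] [DecidableEq C] {ℓ₁ ℓ₂ k₁ k₂ n : ℕ}
    (code : CascadeCode A B C ℓ₁ ℓ₂ k₁ k₂ n) :
    Matrix ((Fin n → A) × (Fin n → B) × (Fin n → C))
      ((Fin n → A) × (Fin n → B) × (Fin n → C)) ℂ :=
  let ρ1 := extR code.EncA code.Ψ
  let ρ2 := applyOn eBob code.EncB (tens ρ1 code.Θ)
  let ρ3 := applyOn eCharlie code.Dec ρ2
  Matrix.reindex eFin eFin ρ3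

/-- Achievability of a rate tuple (Q₁, Q₂, E₁, E₂) for coordination in the
cascade network: for every ε, δ > 0 and all sufficiently large n there is a
(2^{n(Q₁+δ)}, 2^{n(Q₂+δ)}, 2^{n(E₁+δ)}, 2^{n(E₂+δ)}, n) coordination code whose
output is ε-close to ω^{⊗n} in trace norm. -/
def CascadeAchievable [Fintype A] [DecidableEq A] [Fintype B] [DecidableEq B]
    [Fintype C] [DecidableEq C] (ω : Matrix (A × B × C) (A × B × C) ℂ)
    (Q₁ Q₂ E₁ E₂ : ℝ) : Prop :=
  ∀ ε > (0 : ℝ), ∀ δ > (0 : ℝ), ∃ N : ℕ, ∀ n ≥ N,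
    ∃ ℓ₁ ℓ₂ k₁ k₂ : ℕ,
      (ℓ₁ : ℝ) ≤ n * (Q₁ + δ) ∧ (ℓ₂ : ℝ) ≤ n * (Q₂ + δ) ∧
      (k₁ : ℝ) ≤ n * (E₁ + δ) ∧ (k₂ : ℝ) ≤ n * (E₂ + δ) ∧
      ∃ code : CascadeCode A B C ℓ₁ ℓ₂ k₁ k₂ n,
        traceNorm (cascadeOutput code - prodPow3 ω n) ≤ ε

end QCoord

/-! ### The multiple-access network -/

namespace QCoord

variable {A B C C1 C2 : Type*}

/-- Marginal ω_A of a tripartite state. -/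
def mA3 [Fintype B] [Fintype C] (ω : Matrix (A × B × C) (A × B × C) ℂ) :
    Matrix A A ℂ :=
  Matrix.of fun a a' => ∑ b, ∑ c, ω (a, b, c) (a', b, c)

/-- Marginal ω_B of a tripartite state. -/
def mB3 [Fintype A] [Fintype C] (ω : Matrix (A × B × C) (A × B × C) ℂ) :
    Matrix B B ℂ :=
  Matrix.of fun b b' => ∑ a, ∑ c, ω (a, b, c) (a, b', c)

/-- Marginal ω_{AB} of a tripartite state. -/
def mAB3 [Fintype C] (ω : Matrix (A × B × C) (A × B × C) ℂ) :
    Matrix (A × B) (A × B) ℂ :=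
  Matrix.of fun p q => ∑ c, ω (p.1, p.2, c) (q.1, q.2, c)

variable (A B C) in
/-- A (2^ℓ₁, 2^ℓ₂, n) coordination code for the multiple-access network:
CPTP encoders for Alice and Bob and a CPTP decoder for Charlie acting on the
two quantum descriptions. -/
structure MACCode [Fintype A] [DecidableEq A] [Fintype B] [DecidableEq B]
    [Fintype C] [DecidableEq C] (ℓ₁ ℓ₂ n : ℕ) where
  EncA : Matrix (Fin n → A) (Fin n → A) ℂ →ₗ[ℂ]
    Matrix ((Fin n → A) × Fin (2 ^ ℓ₁)) ((Fin n → A) × Fin (2 ^ ℓ₁)) ℂ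
  EncA_cptp : IsCPTP EncA
  EncB : Matrix (Fin n → B) (Fin n → B) ℂ →ₗ[ℂ]
    Matrix ((Fin n → B) × Fin (2 ^ ℓ₂)) ((Fin n → B) × Fin (2 ^ ℓ₂)) ℂ
  EncB_cptp : IsCPTP EncB
  Dec : Matrix (Fin (2 ^ ℓ₁) × Fin (2 ^ ℓ₂)) (Fin (2 ^ ℓ₁) × Fin (2 ^ ℓ₂)) ℂ →ₗ[ℂ]
    Matrix (Fin n → C) (Fin n → C) ℂ
  Dec_cptp : IsCPTP Dec

section mac

variable [Fintype A] [DecidableEq A] [Fintype B] [DecidableEq B]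
  [Fintype C] [DecidableEq C] {ℓ₁ ℓ₂ n : ℕ}

/-- Output state ρ̂_{AⁿBⁿCⁿ} of a multiple-access coordination code:
ρ̂ = (id ⊗ D)(E(ω_A^{⊗n}) ⊗ F(ω_B^{⊗n})). -/
def macOutput (ω : Matrix (A × B × C) (A × B × C) ℂ)
    (code : MACCode A B C ℓ₁ ℓ₂ n) :
    Matrix ((Fin n → A) × (Fin n → B) × (Fin n → C))
      ((Fin n → A) × (Fin n → B) × (Fin n → C)) ℂ :=
  let ρ1 := code.EncA (tpow (mA3 ω) n)
  let ρ2 := code.EncB (tpow (mB3 ω) n)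
  let ρ3 := applyOn
    (⟨fun x => ((x.1.2, x.2.2), (x.1.1, x.2.1)),
      fun y => ((y.2.1, y.1.1), (y.2.2, y.1.2)),
      fun _ => rfl, fun _ => rfl⟩ :
      (((Fin n → A) × Fin (2 ^ ℓ₁)) × ((Fin n → B) × Fin (2 ^ ℓ₂))) ≃
        ((Fin (2 ^ ℓ₁) × Fin (2 ^ ℓ₂)) × ((Fin n → A) × (Fin n → B))))
    code.Dec (tens ρ1 ρ2)
  Matrix.reindex eFin eFin ρ3

/-- The reduced output state of a multiple-access code on (Aⁿ, Bⁿ). -/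
def macOutputAB (ω : Matrix (A × B × C) (A × B × C) ℂ)
    (code : MACCode A B C ℓ₁ ℓ₂ n) :
    Matrix ((Fin n → A) × (Fin n → B)) ((Fin n → A) × (Fin n → B)) ℂ :=
  Matrix.of fun p q => ∑ cn : Fin n → C,
    macOutput ω code (p.1, p.2, cn) (q.1, q.2, cn)

/-- Achievability of a rate pair (Q₁, Q₂) for coordination in the
multiple-access network. -/
def MACAchievable (ω : Matrix (A × B × C) (A × B × C) ℂ) (Q₁ Q₂ : ℝ) : Prop :=
  ∀ ε > (0 : ℝ), ∀ δ > (0 : ℝ), ∃ N : ℕ, ∀ n ≥ N,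
    ∃ ℓ₁ ℓ₂ : ℕ, (ℓ₁ : ℝ) ≤ n * (Q₁ + δ) ∧ (ℓ₂ : ℝ) ≤ n * (Q₂ + δ) ∧
      ∃ code : MACCode A B C ℓ₁ ℓ₂ n,
        traceNorm (macOutput ω code - prodPow3 ω n) ≤ ε

end mac

/-- Marginal state on C₁ of the purification |φ_{AC₁}⟩. -/
def margC1 [Fintype A] (φ : A × C1 → ℂ) : Matrix C1 C1 ℂ :=
  Matrix.of fun c c' => ∑ a, φ (a, c) * star (φ (a, c'))

/-- Marginal state on C₂ of the purification |χ_{BC₂}⟩. -/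
def margC2 [Fintype B] (χ : B × C2 → ℂ) : Matrix C2 C2 ℂ :=
  Matrix.of fun c c' => ∑ b, χ (b, c) * star (χ (b, c'))

end QCoord

/-!
Charlie's decoder is trace preserving, so tracing out `Cⁿ` undoes it and leaves the product of
the two encoders' outputs with the messages traced out: `ρ̂_{AⁿBⁿ} = ρ⁽¹⁾_{Aⁿ} ⊗ ρ⁽²⁾_{Bⁿ}`.

For the converse, the marginal of `ρ̂` on the first copy of `AB` is then a product `X ⊗ Y`, while
that of `ω^{⊗n}` is `ω_{AB}`. Every entry of a partial trace of a Hermitian matrix is bounded by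
its trace norm, so achievability makes `ω_{AB}` a limit of products. On products
`T = X ⊗ Y` the closed condition `tr T • T = T_A ⊗ T_B` holds, and at `ω_{AB}` (of trace one)
it reads `ω_{AB} = ω_A ⊗ ω_B`.
-/

theorem Matrix.IsHermitian.apply_eq_sum_eigenvalues {d : Type*} [Fintype d] [DecidableEq d]
    {M : Matrix d d ℂ} (hM : M.IsHermitian) (p q : d) :
    M p q = ∑ k, (hM.eigenvalues k : ℂ) *
      (hM.eigenvectorBasis k p * star (hM.eigenvectorBasis k q)) := by
  conv_lhs => rw [hM.spectral_theorem, Unitary.conjStarAlgAut_apply, Matrix.mul_apply]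
  simp only [Matrix.mul_diagonal, Matrix.star_apply,
    Matrix.IsHermitian.eigenvectorUnitary_apply, Function.comp_apply]
  exact Finset.sum_congr rfl fun k _ => by simp; ring

namespace QCoord

open scoped Matrix

section TraceNorm

open scoped MatrixOrder

variable {d ι : Type*} [Fintype d] [DecidableEq d]

theorem traceNorm_eq_re_trace_abs (M : Matrix d d ℂ) : traceNorm M = (CFC.abs M).trace.re := by
  have hMM := Matrix.posSemidef_conjTranspose_mul_self M
  rw [CFC.abs, Matrix.star_eq_conjTranspose, CFC.sqrt_eq_real_sqrt _ hMM.nonneg,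
    cfcₙ_eq_cfc (hf0 := Real.sqrt_zero), hMM.1.cfc_eq, Matrix.IsHermitian.cfc,
    Unitary.conjStarAlgAut_apply]
  rfl

theorem traceNorm_eq_sum_abs_eigenvalues {M : Matrix d d ℂ}
    (hM : M.IsHermitian) : traceNorm M = ∑ k, |hM.eigenvalues k| := by
  rw [traceNorm_eq_re_trace_abs, CFC.abs_eq_cfc_norm M hM.isSelfAdjoint, hM.cfc_eq,
    Matrix.IsHermitian.cfc, Unitary.conjStarAlgAut_apply, Matrix.trace_mul_cycle,
    Unitary.coe_star_mul_self, Matrix.one_mul, Matrix.trace_diagonal]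
  simp

omit [DecidableEq d] in
theorem norm_sum_mul_star_comp_le_one {v : EuclideanSpace ℂ d} (hv : ‖v‖ = 1) [Fintype ι]
    {f g : ι → d} (hf : f.Injective) (hg : g.Injective) :
    ‖∑ i, v (f i) * star (v (g i))‖ ≤ 1 := by
  have hsub : ∀ h : ι → d, h.Injective → ∑ i, ‖v (h i)‖ ^ 2 ≤ 1 := fun h hh => by
    calc ∑ i, ‖v (h i)‖ ^ 2 = ∑ p ∈ Finset.univ.map ⟨h, hh⟩, ‖v p‖ ^ 2 := by simp
      _ ≤ ∑ p, ‖v p‖ ^ 2 := Finset.sum_le_univ_sum_of_nonneg fun _ => by positivity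
      _ = 1 := by rw [← EuclideanSpace.norm_sq_eq, hv, one_pow]
  calc ‖∑ i, v (f i) * star (v (g i))‖ ≤ ∑ i, ‖v (f i)‖ * ‖v (g i)‖ := by
        refine (norm_sum_le _ _).trans_eq (Finset.sum_congr rfl fun i _ => ?_)
        rw [norm_mul, norm_star]
    _ ≤ ∑ i, (‖v (f i)‖ ^ 2 + ‖v (g i)‖ ^ 2) / 2 :=
        Finset.sum_le_sum fun i _ => by nlinarith [sq_nonneg (‖v (f i)‖ - ‖v (g i)‖)]
    _ ≤ 1 := by
        rw [← Finset.sum_div, Finset.sum_add_distrib]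
        linarith [hsub f hf, hsub g hg]

theorem norm_sum_apply_le_traceNorm [Fintype ι] {M : Matrix d d ℂ} (hM : M.IsHermitian)
    {f g : ι → d} (hf : f.Injective) (hg : g.Injective) :
    ‖∑ i, M (f i) (g i)‖ ≤ traceNorm M := by
  simp_rw [hM.apply_eq_sum_eigenvalues]
  rw [Finset.sum_comm, traceNorm_eq_sum_abs_eigenvalues hM]
  refine (norm_sum_le _ _).trans (Finset.sum_le_sum fun k _ => ?_)
  rw [← Finset.mul_sum, norm_mul, Complex.norm_real, Real.norm_eq_abs]
  exact mul_le_of_le_one_right (abs_nonneg _)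
    (norm_sum_mul_star_comp_le_one (hM.eigenvectorBasis.orthonormal.1 k) hf hg)

end TraceNorm

section Channels

variable {α β γ : Type*} [Fintype α]

theorem apply_apply_eq_sum_choi [DecidableEq α] (Φ : Matrix α α ℂ →ₗ[ℂ] Matrix β β ℂ)
    (X : Matrix α α ℂ) (p q : β) : Φ X p q = ∑ i, ∑ j, X i j * choi Φ (i, p) (j, q) := by
  conv_lhs => rw [X.matrix_eq_sum_single]
  simp only [map_sum, Matrix.sum_apply]
  refine Finset.sum_congr rfl fun i _ => Finset.sum_congr rfl fun j _ => ?_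
  rw [← mul_one (X i j), ← smul_eq_mul, ← Matrix.smul_single, map_smul]
  simp [choi]

theorem conjTranspose_apply_of_isHermitian_choi [DecidableEq α]
    {Φ : Matrix α α ℂ →ₗ[ℂ] Matrix β β ℂ} (hΦ : (choi Φ).IsHermitian) (X : Matrix α α ℂ) :
    (Φ X)ᴴ = Φ Xᴴ := by
  ext p q
  rw [Matrix.conjTranspose_apply, apply_apply_eq_sum_choi, apply_apply_eq_sum_choi, star_sum,
    Finset.sum_comm]
  simp only [star_sum, star_mul', Matrix.conjTranspose_apply, hΦ.apply]

theorem isHermitian_apply_of_isHermitian_choi [DecidableEq α]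
    {Φ : Matrix α α ℂ →ₗ[ℂ] Matrix β β ℂ} (hΦ : (choi Φ).IsHermitian) {X : Matrix α α ℂ}
    (hX : X.IsHermitian) : (Φ X).IsHermitian := by
  rw [Matrix.IsHermitian, conjTranspose_apply_of_isHermitian_choi hΦ, hX.eq]

theorem conjTranspose_extR [DecidableEq α] {Φ : Matrix α α ℂ →ₗ[ℂ] Matrix β β ℂ}
    (hΦ : (choi Φ).IsHermitian) (ρ : Matrix (α × γ) (α × γ) ℂ) :
    (extR Φ ρ)ᴴ = extR Φ ρᴴ := by
  ext p q
  change star (Φ _ q.1 p.1) = Φ _ p.1 q.1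
  rw [← Matrix.conjTranspose_apply, conjTranspose_apply_of_isHermitian_choi hΦ]
  rfl

theorem ptrL_extR [Fintype β] {Φ : Matrix α α ℂ →ₗ[ℂ] Matrix β β ℂ}
    (hΦ : ∀ X, (Φ X).trace = X.trace) (ρ : Matrix (α × γ) (α × γ) ℂ) :
    ptrL (extR Φ ρ) = ptrL ρ := by
  ext i j
  exact hΦ (Matrix.of fun a b => ρ (a, i) (b, j))

end Channels

section Hermitian

variable {α β γ δ : Type*}

theorem isHermitian_tens {X : Matrix α α ℂ} {Y : Matrix β β ℂ} (hX : X.IsHermitian)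
    (hY : Y.IsHermitian) : (tens X Y).IsHermitian :=
  Matrix.IsHermitian.ext fun p q => by simp [tens, hX.apply, hY.apply]

theorem isHermitian_tpow [Fintype α] {ρ : Matrix α α ℂ} (hρ : ρ.IsHermitian) (n : ℕ) :
    (tpow ρ n).IsHermitian :=
  Matrix.IsHermitian.ext fun p q => by simp [tpow, star_prod, hρ.apply]

theorem isHermitian_applyOn [Fintype α] [DecidableEq α]
    {Φ : Matrix α α ℂ →ₗ[ℂ] Matrix β β ℂ} (hΦ : (choi Φ).IsHermitian) {ρ : Matrix δ δ ℂ}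
    (hρ : ρ.IsHermitian) (e : δ ≃ α × γ) :
    (applyOn e Φ ρ).IsHermitian := by
  rw [Matrix.IsHermitian, applyOn, conjTranspose_extR hΦ, Matrix.reindex_apply,
    (hρ.submatrix _).eq]

variable {A B C : Type*} {ω : Matrix (A × B × C) (A × B × C) ℂ}

theorem isHermitian_mA3 [Fintype B] [Fintype C] (hω : ω.IsHermitian) : (mA3 ω).IsHermitian :=
  Matrix.IsHermitian.ext fun p q => by simp [mA3, star_sum, hω.apply]

theorem isHermitian_mB3 [Fintype A] [Fintype C] (hω : ω.IsHermitian) : (mB3 ω).IsHermitian :=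
  Matrix.IsHermitian.ext fun p q => by simp [mB3, star_sum, hω.apply]

theorem isHermitian_prodPow3 [Fintype A] [Fintype B] [Fintype C] (hω : ω.IsHermitian) (n : ℕ) :
    (prodPow3 ω n).IsHermitian :=
  Matrix.IsHermitian.ext fun p q => by simp [prodPow3, star_prod, hω.apply]

theorem isHermitian_macOutput [Fintype A] [DecidableEq A] [Fintype B] [DecidableEq B]
    [Fintype C] [DecidableEq C] {ℓ₁ ℓ₂ n : ℕ}
    (hω : ω.IsHermitian) (code : MACCode A B C ℓ₁ ℓ₂ n) : (macOutput ω code).IsHermitian :=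
  (isHermitian_applyOn code.Dec_cptp.1.isHermitian
    (isHermitian_tens
      (isHermitian_apply_of_isHermitian_choi code.EncA_cptp.1.isHermitian
        (isHermitian_tpow (isHermitian_mA3 hω) n))
      (isHermitian_apply_of_isHermitian_choi code.EncB_cptp.1.isHermitian
        (isHermitian_tpow (isHermitian_mB3 hω) n))) _).submatrix _

end Hermitian

section Product

variable {α β : Type*}

theorem ptrR_tens [Fintype β] (X : Matrix α α ℂ) (Y : Matrix β β ℂ) :
    ptrR (tens X Y) = Y.trace • X := by
  ext i j
  simp [ptrR, tens, Matrix.trace, Finset.mul_sum, mul_comm]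

theorem ptrL_tens [Fintype α] (X : Matrix α α ℂ) (Y : Matrix β β ℂ) :
    ptrL (tens X Y) = X.trace • Y := by
  ext i j
  simp [ptrL, tens, Matrix.trace, Finset.sum_mul]

theorem trace_tens [Fintype α] [Fintype β] (X : Matrix α α ℂ) (Y : Matrix β β ℂ) :
    (tens X Y).trace = X.trace * Y.trace :=
  Matrix.trace_kronecker X Y

theorem trace_smul_eq_tens_ptrR_ptrL_of_mem_closure [Fintype α] [Fintype β]
    {M : Matrix (α × β) (α × β) ℂ}
    (hM : M ∈ closure (Set.range fun XY : Matrix α α ℂ × Matrix β β ℂ => tens XY.1 XY.2)) :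
    M.trace • M = tens (ptrR M) (ptrL M) := by
  have hclosed :
      IsClosed {M : Matrix (α × β) (α × β) ℂ | M.trace • M = tens (ptrR M) (ptrL M)} :=
    isClosed_eq (by fun_prop) (by unfold tens ptrR ptrL; fun_prop)
  refine closure_minimal ?_ hclosed hM
  rintro _ ⟨⟨X, Y⟩, rfl⟩
  change (tens X Y).trace • tens X Y = tens (ptrR (tens X Y)) (ptrL (tens X Y))
  rw [trace_tens, ptrR_tens, ptrL_tens]
  ext p q
  simp only [tens, Matrix.smul_apply, Matrix.of_apply, smul_eq_mul]
  ring

end Product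

section HeadMarginal

variable {α β γ : Type*} {m : ℕ}

def tpow₂ (N : Matrix (α × β) (α × β) ℂ) (n : ℕ) :
    Matrix ((Fin n → α) × (Fin n → β)) ((Fin n → α) × (Fin n → β)) ℂ :=
  Matrix.of fun p q => ∏ k, N (p.1 k, p.2 k) (q.1 k, q.2 k)

def headMarginal [Fintype α] (X : Matrix (Fin (m + 1) → α) (Fin (m + 1) → α) ℂ) :
    Matrix α α ℂ :=
  Matrix.of fun a a' => ∑ x : Fin m → α, X (Fin.cons a x) (Fin.cons a' x)

def headMarginal₂ [Fintype α] [Fintype β]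
    (Z : Matrix ((Fin (m + 1) → α) × (Fin (m + 1) → β))
      ((Fin (m + 1) → α) × (Fin (m + 1) → β)) ℂ) :
    Matrix (α × β) (α × β) ℂ :=
  Matrix.of fun p q => ∑ r : (Fin m → α) × (Fin m → β),
    Z (Fin.cons p.1 r.1, Fin.cons p.2 r.2) (Fin.cons q.1 r.1, Fin.cons q.2 r.2)

variable [Fintype α] [Fintype β]

theorem headMarginal₂_tens (X : Matrix (Fin (m + 1) → α) (Fin (m + 1) → α) ℂ)
    (Y : Matrix (Fin (m + 1) → β) (Fin (m + 1) → β) ℂ) :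
    headMarginal₂ (tens X Y) = tens (headMarginal X) (headMarginal Y) := by
  ext p q
  simp [headMarginal₂, headMarginal, tens, Fintype.sum_prod_type, Finset.sum_mul_sum]

theorem trace_tpow₂ (N : Matrix (α × β) (α × β) ℂ) (n : ℕ) :
    (tpow₂ N n).trace = N.trace ^ n := by
  rw [Matrix.trace, Matrix.trace, Fintype.sum_pow,
    ← (Equiv.arrowProdEquivProdArrow (Fin n) (fun _ => α) (fun _ => β)).sum_comp]
  rfl

theorem headMarginal₂_tpow₂ (N : Matrix (α × β) (α × β) ℂ) :
    headMarginal₂ (tpow₂ N (m + 1)) = N.trace ^ m • N := by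
  ext p q
  simp only [headMarginal₂, tpow₂, Matrix.of_apply, Fin.prod_univ_succ, Fin.cons_zero,
    Fin.cons_succ, ← Finset.mul_sum, Matrix.smul_apply, smul_eq_mul, ← trace_tpow₂]
  rw [mul_comm]
  rfl

theorem norm_headMarginal₂_apply_le_traceNorm [Fintype γ] [DecidableEq α] [DecidableEq β]
    [DecidableEq γ] {D : Matrix ((Fin (m + 1) → α) × (Fin (m + 1) → β) × γ)
      ((Fin (m + 1) → α) × (Fin (m + 1) → β) × γ) ℂ} (hD : D.IsHermitian) (p q : α × β) :
    ‖headMarginal₂ (mAB3 D) p q‖ ≤ traceNorm D := by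
  have hinj : ∀ s : α × β, Function.Injective fun i : ((Fin m → α) × (Fin m → β)) × γ =>
      ((Fin.cons s.1 i.1.1 : Fin (m + 1) → α), (Fin.cons s.2 i.1.2 : Fin (m + 1) → β), i.2) := by
    rintro s ⟨⟨x, y⟩, z⟩ ⟨⟨x', y'⟩, z'⟩ h
    simp_all [Fin.cons_inj]
  have h := norm_sum_apply_le_traceNorm hD (hinj p) (hinj q)
  rw [Fintype.sum_prod_type] at h
  exact h

end HeadMarginal

section MultipleAccess

variable {A B C : Type*} [Fintype A] [Fintype B] [Fintype C]

theorem macOutputAB_eq_tens [DecidableEq A] [DecidableEq B] [DecidableEq C] {ℓ₁ ℓ₂ n : ℕ}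
    (ω : Matrix (A × B × C) (A × B × C) ℂ)
    (code : MACCode A B C ℓ₁ ℓ₂ n) :
    macOutputAB ω code =
      tens (ptrR (code.EncA (tpow (mA3 ω) n))) (ptrR (code.EncB (tpow (mB3 ω) n))) := by
  change ptrL (extR code.Dec _) = _
  rw [ptrL_extR code.Dec_cptp.2]
  ext ⟨u, v⟩ ⟨u', v'⟩
  simp [ptrL, ptrR, tens, Fintype.sum_prod_type, Finset.sum_mul_sum]

theorem trace_mAB3 (ω : Matrix (A × B × C) (A × B × C) ℂ) : (mAB3 ω).trace = ω.trace := by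
  simp [Matrix.trace, mAB3, Fintype.sum_prod_type]

theorem mAB3_prodPow3 (ω : Matrix (A × B × C) (A × B × C) ℂ) (n : ℕ) :
    mAB3 (prodPow3 ω n) = tpow₂ (mAB3 ω) n := by
  ext p q
  simp [mAB3, prodPow3, tpow₂, Fintype.prod_sum]

theorem headMarginal₂_mAB3_prodPow3 {ω : Matrix (A × B × C) (A × B × C) ℂ} (hω : ω.trace = 1)
    (m : ℕ) : headMarginal₂ (mAB3 (prodPow3 ω (m + 1))) = mAB3 ω := by
  rw [mAB3_prodPow3, headMarginal₂_tpow₂, trace_mAB3, hω, one_pow, one_smul]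

attribute [local instance] Matrix.normedAddCommGroup in
theorem mAB3_mem_closure_range_tens [DecidableEq A] [DecidableEq B] [DecidableEq C]
    {ω : Matrix (A × B × C) (A × B × C) ℂ} (hω : IsDensity ω)
    {Q₁ Q₂ : ℝ} (hach : MACAchievable ω Q₁ Q₂) :
    mAB3 ω ∈ closure (Set.range fun XY : Matrix A A ℂ × Matrix B B ℂ => tens XY.1 XY.2) := by
  refine Metric.mem_closure_iff.2 fun ε hε => ?_
  obtain ⟨N, hN⟩ := hach (ε / 2) (half_pos hε) 1 one_pos
  obtain ⟨ℓ₁, ℓ₂, -, -, code, hcode⟩ := hN (N + 1) N.le_succ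
  refine ⟨headMarginal₂ (macOutputAB ω code),
    ⟨(headMarginal (ptrR (code.EncA (tpow (mA3 ω) (N + 1)))),
      headMarginal (ptrR (code.EncB (tpow (mB3 ω) (N + 1))))), ?_⟩, ?_⟩
  · rw [macOutputAB_eq_tens, headMarginal₂_tens]
  have hdiff : headMarginal₂ (macOutputAB ω code) - mAB3 ω =
      headMarginal₂ (mAB3 (macOutput ω code - prodPow3 ω (N + 1))) := by
    conv_lhs => rw [← headMarginal₂_mAB3_prodPow3 hω.2 N]
    ext p q
    simp [headMarginal₂, mAB3, macOutputAB, Finset.sum_sub_distrib]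
  have hD := (isHermitian_macOutput hω.1.isHermitian code).sub
    (isHermitian_prodPow3 hω.1.isHermitian (N + 1))
  rw [dist_comm, dist_eq_norm, hdiff]
  refine ((Matrix.norm_le_iff (half_pos hε).le).2 fun p q => ?_).trans_lt (half_lt_self hε)
  exact (norm_headMarginal₂_apply_le_traceNorm hD p q).trans hcode

end MultipleAccess

/-- **Multiple-access output factorization and necessity of product
structure.**  For every multiple-access coordination code the reduced output
on (Aⁿ, Bⁿ) factorizes as ρ⁽¹⁾_{Aⁿ} ⊗ ρ⁽²⁾_{Bⁿ}; consequently, if some rate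
pair is achievable for ω_{ABC}, then ω_{AB} = ω_A ⊗ ω_B. -/
theorem mac_output_factorization
    {A B C : Type} [Fintype A] [DecidableEq A] [Fintype B] [DecidableEq B]
    [Fintype C] [DecidableEq C]
    (ω : Matrix (A × B × C) (A × B × C) ℂ) (hω : IsDensity ω) :
    (∀ (ℓ₁ ℓ₂ n : ℕ) (code : MACCode A B C ℓ₁ ℓ₂ n),
      macOutputAB ω code =
        tens (ptrR (code.EncA (tpow (mA3 ω) n)))
          (ptrR (code.EncB (tpow (mB3 ω) n)))) ∧
    ((∃ Q₁ Q₂ : ℝ, MACAchievable ω Q₁ Q₂) →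
      mAB3 ω = tens (mA3 ω) (mB3 ω)) := by
  refine ⟨fun _ _ _ code => macOutputAB_eq_tens ω code, ?_⟩
  rintro ⟨Q₁, Q₂, hach⟩
  have h := trace_smul_eq_tens_ptrR_ptrL_of_mem_closure (mAB3_mem_closure_range_tens hω hach)
  rwa [trace_mAB3, hω.2, one_smul] at h

end QCoord
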